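/- arXiv:1004.0776 — 3 statements merged into one kernel-verified Lean document; each statement's English description precedes it below -/
import Mathlib

section
/- Any ortholattice that admits a strong set of quantum states is orthomodular: b ≤ a and c ≤ a' imply a∩(b∪c) = (a∩b)∪(a∩c). -/
/-- An ortholattice: an algebra ⟨L, ', ∪, ∩⟩ satisfying the standard identities. -/
structure OL (L : Type*) where
  compl : L → L
  join : L → L → L
  meet : L → L → L
  join_comm : ∀ a b, join a b = join b a
  join_assoc : ∀ a b c, join (join a b) c = join a (join b c)
  compl_compl : ∀ a, compl (compl a) = a
  join_one : ∀ a b, join a (join b (compl b)) = join b (compl b)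
  absorb : ∀ a b, join a (meet a b) = a
  meet_def : ∀ a b, meet a b = compl (join (compl a) (compl b))

/-- The ordering relation on an ortholattice: a ≤ b iff a ∩ b = a. -/
def OL.le {L : Type*} (O : OL L) (a b : L) : Prop := O.meet a b = a

/-- A state on an ortholattice: m : L → [0,1] with m(1) = 1 and finite additivity
on orthogonal pairs (a ⊥ b iff a ≤ b'). -/
def OL.IsState {L : Type*} (O : OL L) (m : L → ℝ) : Prop :=
  (∀ a, 0 ≤ m a ∧ m a ≤ 1) ∧
  (∀ a, m (O.join a (O.compl a)) = 1) ∧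
  (∀ a b, O.le a (O.compl b) → m (O.join a b) = m a + m b)

/-- S is a strong set of quantum states on O. -/
def OL.IsStrongQuantum {L : Type*} (O : OL L) (S : Set (L → ℝ)) : Prop :=
  S.Nonempty ∧ (∀ m ∈ S, O.IsState m) ∧
  ∀ a b : L, ∃ m ∈ S, ((m a = 1 → m b = 1) → O.le a b)

/-!
A strong set of states detects the order: `a ≤ b` as soon as every state of the set that is
certain of `a` is certain of `b`. Let `b ≤ a` and `c ≤ a'`. A state `m` with
`m (a ∩ (b ∪ c)) = 1` has `m a = 1`, hence `m c ≤ m a' = 0`, and additivity on the orthogonal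
pair `b, c` gives `m b = m (b ∪ c) = 1`; so `a ∩ (b ∪ c) = b`. No state is certain of `a ∩ c`,
so `a ∩ c ≤ b`, and the right-hand side `b ∪ (a ∩ c)` is `b` as well.
-/

namespace OL

variable {L : Type*} (O : OL L)

theorem compl_join (a b : L) : O.compl (O.join a b) = O.meet (O.compl a) (O.compl b) := by
  rw [O.meet_def, O.compl_compl, O.compl_compl]

theorem meet_comm (a b : L) : O.meet a b = O.meet b a := by
  rw [O.meet_def, O.meet_def, O.join_comm]

theorem meet_assoc (a b c : L) : O.meet (O.meet a b) c = O.meet a (O.meet b c) := by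
  rw [O.meet_def a b, O.meet_def b c, O.meet_def, O.meet_def, O.compl_compl, O.compl_compl,
    O.join_assoc]

theorem meet_join_self (a b : L) : O.meet a (O.join a b) = a := by
  rw [O.meet_def, O.compl_join a b, O.absorb, O.compl_compl]

theorem join_idem (a : L) : O.join a a = a := by
  calc O.join a a = O.join a (O.meet a (O.join a a)) := by rw [O.meet_join_self]
    _ = a := O.absorb a _

theorem meet_idem (a : L) : O.meet a a = a := by
  rw [O.meet_def, O.join_idem, O.compl_compl]

theorem le_refl (a : L) : O.le a a := O.meet_idem a

theorem le_trans {a b c : L} (hab : O.le a b) (hbc : O.le b c) : O.le a c := by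
  unfold OL.le at *
  rw [← hab, O.meet_assoc, hbc]

theorem le_antisymm {a b : L} (hab : O.le a b) (hba : O.le b a) : a = b :=
  hab.symm.trans ((O.meet_comm a b).trans hba)

theorem meet_le_left (a b : L) : O.le (O.meet a b) a := by
  unfold OL.le
  rw [O.meet_comm, ← O.meet_assoc, O.meet_idem]

theorem meet_le_right (a b : L) : O.le (O.meet a b) b := by
  unfold OL.le
  rw [O.meet_assoc, O.meet_idem]

theorem le_meet {x a b : L} (ha : O.le x a) (hb : O.le x b) : O.le x (O.meet a b) := by
  unfold OL.le at *
  rw [← O.meet_assoc, ha, hb]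

theorem le_join_left (a b : L) : O.le a (O.join a b) := O.meet_join_self a b

theorem join_eq_right_of_le {a b : L} (h : O.le a b) : O.join a b = b := by
  rw [O.join_comm, ← h, O.meet_comm]
  exact O.absorb b a

theorem compl_le_compl {a b : L} (h : O.le a b) : O.le (O.compl b) (O.compl a) := by
  unfold OL.le
  rw [O.meet_comm, ← O.compl_join, O.join_eq_right_of_le h]

theorem le_compl_comm {a b : L} (h : O.le a (O.compl b)) : O.le b (O.compl a) := by
  simpa only [O.compl_compl] using O.compl_le_compl h

namespace IsState

variable {O} {m : L → ℝ} (hm : O.IsState m)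
include hm

theorem map_compl (a : L) : m (O.compl a) = 1 - m a := by
  have hadd := hm.2.2 a (O.compl a) (by rw [O.compl_compl]; exact O.le_refl a)
  linarith [hm.2.1 a]

theorem mono {a b : L} (h : O.le a b) : m a ≤ m b := by
  have hadd := hm.2.2 (O.compl b) a (O.compl_le_compl h)
  linarith [(hm.1 (O.join (O.compl b) a)).2, hm.map_compl b]

theorem eq_one_of_le {a b : L} (h : O.le a b) (ha : m a = 1) : m b = 1 :=
  _root_.le_antisymm (hm.1 b).2 (ha ▸ hm.mono h)

theorem eq_zero_of_le_compl {a c : L} (h : O.le c (O.compl a)) (ha : m a = 1) : m c = 0 :=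
  _root_.le_antisymm (by linarith [hm.mono h, hm.map_compl a]) (hm.1 c).1

end IsState

variable {O} in
theorem IsStrongQuantum.le_of_forall_eq_one {S : Set (L → ℝ)} (hS : O.IsStrongQuantum S)
    {a b : L} (h : ∀ m ∈ S, m a = 1 → m b = 1) : O.le a b := by
  obtain ⟨m, hmS, hm⟩ := hS.2.2 a b
  exact hm (h m hmS)

end OL

theorem stmt_5 {L : Type*} (O : OL L)
    (S : Set (L → ℝ)) (hS : O.IsStrongQuantum S) :
    ∀ a b c : L, O.le b a → O.le c (O.compl a) →
      O.meet a (O.join b c) = O.join (O.meet a b) (O.meet a c) := by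
  intro a b c hba hca
  have hbc : O.le b (O.compl c) := O.le_trans hba (O.le_compl_comm hca)
  have hleft : O.meet a (O.join b c) = b := by
    refine O.le_antisymm (hS.le_of_forall_eq_one fun m hmS h => ?_)
      (O.le_meet hba (O.le_join_left b c))
    have hm := hS.2.1 m hmS
    have hm_join := hm.eq_one_of_le (O.meet_le_right _ _) h
    have hc := hm.eq_zero_of_le_compl hca (hm.eq_one_of_le (O.meet_le_left _ _) h)
    linarith [hm.2.2 b c hbc]
  have hacb : O.le (O.meet a c) b := hS.le_of_forall_eq_one fun m hmS h => by
    have hm := hS.2.1 m hmS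
    have hc := hm.eq_zero_of_le_compl hca (hm.eq_one_of_le (O.meet_le_left a c) h)
    linarith [hm.eq_one_of_le (O.meet_le_right a c) h]
  rw [hleft, O.meet_comm a b, hba, O.join_comm, O.join_eq_right_of_le hacb]
end

section
/- Let M₀,...,Mₙ and N₀,...,Nₙ (n ≥ 1) be subspaces (not necessarily closed) of a Hilbert space. Define T₁(i₀,i₁) = (M_{i₀}+M_{i₁}) ∩ (N_{i₀}+N_{i₁}) and recursively T_m(i₀,...,i_m) = T_{m-1}(i₀,i₁,i₃,...,i_m) ∩ (T_{m-1}(i₀,i₂,i₃,...,i_m) + T_{m-1}(i₁,i₂,i₃,...,i_m)) for 2 ≤ m ≤ n. Then (M₀+N₀) ∩ ⋯ ∩ (Mₙ+Nₙ) ⊆ N₀ + (M₀ ∩ (M₁ + Tₙ(0,...,n))). -/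
/-!
Decompose `x = a i + b i` with `a i ∈ M i`, `b i ∈ N i`. Every difference `a i - a j` lies in
`M i + M j`, and it also equals `b j - b i ∈ N i + N j`, so it lies in `T₁(i, j)`. The recursion
defining `T_m` is then respected by the identity
`a i₀ - a i₁ = (a i₀ - a i₂) - (a i₁ - a i₂)`, so `a 0 - a 1 ∈ Tₙ(0, …, n)`, and
`x = b 0 + (a 1 + (a 0 - a 1))` exhibits `x ∈ N₀ + (M₀ ∩ (M₁ + Tₙ(0, …, n)))`.
-/

/-- The recursively defined subspace terms of the generalized orthoarguesian
condition.  `Tsub M N m i` is the paper's `T_{m+1}(i 0, …, i (m+1))`; subspace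
sum of submodules is `⊔` and intersection is `⊓`.
Base case: `T₁(i₀,i₁) = (M i₀ + M i₁) ∩ (N i₀ + N i₁)`.
Recursion: `T_m(i₀,…,i_m) = T_{m-1}(i₀,i₁,i₃,…,i_m) ∩
(T_{m-1}(i₀,i₂,i₃,…,i_m) + T_{m-1}(i₁,i₂,i₃,…,i_m))`, where deleting the k-th
index from the tuple `i` is realized by composing with `Fin.succAbove k`. -/
def Tsub {H : Type*} [AddCommGroup H] [Module ℂ H] {n : ℕ}
    (M N : Fin (n + 1) → Submodule ℂ H) :
    (m : ℕ) → (Fin (m + 2) → Fin (n + 1)) → Submodule ℂ H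
  | 0, i => (M (i 0) ⊔ M (i 1)) ⊓ (N (i 0) ⊔ N (i 1))
  | m + 1, i =>
      Tsub M N m (i ∘ Fin.succAbove 2) ⊓
        (Tsub M N m (i ∘ Fin.succAbove 1) ⊔ Tsub M N m (i ∘ Fin.succAbove 0))

section Decomposition

variable {H : Type*} [AddCommGroup H] [Module ℂ H] {n : ℕ} {M N : Fin (n + 1) → Submodule ℂ H}
  {x : H} {a b : Fin (n + 1) → H}

theorem sub_mem_Tsub_zero (ha : ∀ i, a i ∈ M i) (hb : ∀ i, b i ∈ N i)
    (hab : ∀ i, a i + b i = x) (i : Fin 2 → Fin (n + 1)) :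
    a (i 0) - a (i 1) ∈ Tsub M N 0 i := by
  have hdiff : a (i 0) - a (i 1) = -(b (i 0) - b (i 1)) := by
    rw [neg_sub, sub_eq_sub_iff_add_eq_add, hab, add_comm, hab]
  refine Submodule.mem_inf.mpr ⟨Submodule.sub_mem_sup (ha _) (ha _), ?_⟩
  rw [hdiff]
  exact neg_mem (Submodule.sub_mem_sup (hb _) (hb _))

theorem sub_mem_Tsub (ha : ∀ i, a i ∈ M i) (hb : ∀ i, b i ∈ N i)
    (hab : ∀ i, a i + b i = x) (m : ℕ) (i : Fin (m + 2) → Fin (n + 1)) :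
    a (i 0) - a (i 1) ∈ Tsub M N m i := by
  induction m with
  | zero => exact sub_mem_Tsub_zero ha hb hab i
  | succ m ih =>
    have h02 : a (i 0) - a (i 2) ∈ Tsub M N m (i ∘ Fin.succAbove 1) := ih _
    have h12 : a (i 1) - a (i 2) ∈ Tsub M N m (i ∘ Fin.succAbove 0) := ih _
    have hdiff : a (i 0) - a (i 1) = (a (i 0) - a (i 2)) - (a (i 1) - a (i 2)) := by abel
    refine Submodule.mem_inf.mpr ⟨ih _, ?_⟩
    rw [hdiff]
    exact Submodule.sub_mem_sup h02 h12

end Decomposition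

theorem stmt_10_general {H : Type*} [NormedAddCommGroup H] [InnerProductSpace ℂ H]
    (k : ℕ) (M N : Fin (k + 2) → Submodule ℂ H) :
    (⨅ i, M i ⊔ N i) ≤ N 0 ⊔ (M 0 ⊓ (M 1 ⊔ Tsub M N k id)) := by
  intro x hx
  choose a ha b hb hab using fun i => Submodule.mem_sup.mp (Submodule.mem_iInf _ |>.mp hx i)
  have hT : a 0 - a 1 ∈ Tsub M N k id := sub_mem_Tsub ha hb hab k id
  have hx_eq : x = b 0 + (a 1 + (a 0 - a 1)) := by rw [← hab 0]; abel
  rw [hx_eq]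
  exact Submodule.add_mem_sup (hb 0)
    (Submodule.mem_inf.mpr ⟨by rw [add_sub_cancel]; exact ha 0, Submodule.add_mem_sup (ha 1) hT⟩)

/-- Generalized orthoarguesian subspace condition (n = k+1 ≥ 1):
`(M₀+N₀) ∩ ⋯ ∩ (Mₙ+Nₙ) ⊆ N₀ + (M₀ ∩ (M₁ + Tₙ(0,…,n)))` for arbitrary
(not necessarily closed) subspaces of a Hilbert space. -/
theorem stmt_10 {H : Type*} [NormedAddCommGroup H] [InnerProductSpace ℂ H]
    [CompleteSpace H] (k : ℕ) (M N : Fin (k + 2) → Submodule ℂ H) :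
    (⨅ i, M i ⊔ N i) ≤ N 0 ⊔ (M 0 ⊓ (M 1 ⊔ Tsub M N k id)) :=
  stmt_10_general k M N
end

section
/- Let M₀, M₁ and N₀, N₁ be subspaces of a Hilbert space. Then (M₀+N₀) ∩ (M₁+N₁) ⊆ N₀ + (M₀ ∩ (M₁ + ((M₀+M₁) ∩ (N₀+N₁)))). -/
/-!
Write `x = m₀ + n₀ = m₁ + n₁` with `mᵢ ∈ Mᵢ`, `nᵢ ∈ Nᵢ`. Then `m₀ - m₁ = n₁ - n₀` lies in
`(M₀ + M₁) ∩ (N₀ + N₁)`, so `m₀ = m₁ + (m₀ - m₁)` lies in `M₀ ∩ (M₁ + (M₀ + M₁) ∩ (N₀ + N₁))`,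
and `x = n₀ + m₀`. Only the additive structure is used, so the inclusion holds for submodules of
any module.
-/

namespace Submodule

variable {R M : Type*} [Ring R] [AddCommGroup M] [Module R M]

theorem sub_mem_sup_inf_sup_of_add_eq_add {M₀ M₁ N₀ N₁ : Submodule R M} {m₀ m₁ n₀ n₁ : M}
    (hm₀ : m₀ ∈ M₀) (hm₁ : m₁ ∈ M₁) (hn₀ : n₀ ∈ N₀) (hn₁ : n₁ ∈ N₁)
    (h : m₀ + n₀ = m₁ + n₁) : m₀ - m₁ ∈ (M₀ ⊔ M₁) ⊓ (N₀ ⊔ N₁) := by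
  have hsub : m₀ - m₁ = n₁ - n₀ := sub_eq_sub_iff_add_eq_add.2 (by rw [h, add_comm])
  refine ⟨sub_mem (mem_sup_left hm₀) (mem_sup_right hm₁), ?_⟩
  rw [SetLike.mem_coe, hsub]
  exact sub_mem (mem_sup_right hn₁) (mem_sup_left hn₀)

theorem sup_inf_sup_le_sup_inf_sup_inf (M₀ M₁ N₀ N₁ : Submodule R M) :
    (M₀ ⊔ N₀) ⊓ (M₁ ⊔ N₁) ≤ N₀ ⊔ (M₀ ⊓ (M₁ ⊔ ((M₀ ⊔ M₁) ⊓ (N₀ ⊔ N₁)))) := by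
  rintro x ⟨hx₀, hx₁⟩
  obtain ⟨m₀, hm₀, n₀, hn₀, rfl⟩ := mem_sup.1 hx₀
  obtain ⟨m₁, hm₁, n₁, hn₁, h⟩ := mem_sup.1 hx₁
  have hdiff := sub_mem_sup_inf_sup_of_add_eq_add hm₀ hm₁ hn₀ hn₁ h.symm
  have hm₀' : m₀ ∈ M₀ ⊓ (M₁ ⊔ ((M₀ ⊔ M₁) ⊓ (N₀ ⊔ N₁))) :=
    ⟨hm₀, mem_sup.2 ⟨m₁, hm₁, m₀ - m₁, hdiff, add_sub_cancel m₁ m₀⟩⟩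
  rw [add_comm]
  exact add_mem_sup hn₀ hm₀'

end Submodule

/-- For subspaces of a Hilbert space (subspace sum = `⊔` of submodules,
intersection = `⊓`):
`(M₀+N₀) ∩ (M₁+N₁) ⊆ N₀ + (M₀ ∩ (M₁ + ((M₀+M₁) ∩ (N₀+N₁))))`. -/
theorem stmt_11 {H : Type*} [NormedAddCommGroup H] [InnerProductSpace ℂ H]
    (M₀ M₁ N₀ N₁ : Submodule ℂ H) :
    (M₀ ⊔ N₀) ⊓ (M₁ ⊔ N₁) ≤ N₀ ⊔ (M₀ ⊓ (M₁ ⊔ ((M₀ ⊔ M₁) ⊓ (N₀ ⊔ N₁)))) :=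
  Submodule.sup_inf_sup_le_sup_inf_sup_inf M₀ M₁ N₀ N₁
end
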